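/- arXiv:1009.2407 — 5 statements merged into one kernel-verified Lean document; each statement's English description precedes it below -/
import Mathlib

section
/- If d ≥ 2 is a prime power (d = p^n for a prime p and n ≥ 1), then there exists a complete set of d+1 pairwise mutually unbiased orthonormal bases of ℂ^d. -/
open scoped ComplexInnerProductSpace

/-- Two orthonormal bases of `ℂ^d` are *unbiased* if all scalar products between
their members have modulus `1/√d`. -/
def Unbiased {d : ℕ} (A B : OrthonormalBasis (Fin d) ℂ (EuclideanSpace ℂ (Fin d))) : Prop :=
  ∀ j k, ‖⟪A j, B k⟫‖ = 1 / Real.sqrt d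

/-!
Identify `ℂ^d` with the functions on a field `F` of order `d` and fix a primitive additive
character `ψ` of `F`. The Weyl operators `W (a, b) f x = ψ (b x) f (x + a)` are unitary, traceless
unless `(a, b) = 0`, and `W v * W w = ψ (ω v w) • (W w * W v)` for the symplectic form `ω` on `F²`.
So along each of the `d + 1` lines `F • u` through the origin the operators `W (t • u)` commute
together with their adjoints, and have an orthonormal joint eigenbasis `e` with eigenvalue matrix
`χ m t`. Tracelessness of `W (-t • u) * W (s • u)` for `t ≠ s` gives `χᴴ * χ = d • 1`, hence also
`χ * χᴴ = d • 1`. If `f` is a unit joint eigenvector for another line `F • w`, then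
`⟪f, W (t • u) f⟫` vanishes for `t ≠ 0`, since conjugating by a suitable `W (s • w)` multiplies
it by some `ψ (ω _ _) ≠ 1`. Expanding `f` in `e` turns this into `|⟪e m, f⟫|² • χ = δ₀`, and
inverting `χ` gives `|⟪e m, f⟫|² = 1 / d`.
-/

open scoped Matrix ComplexStarModule

section JointEigenbasis

open Module.End LinearMap.IsSymmetric

variable {E : Type*} [NormedAddCommGroup E] [InnerProductSpace ℂ E] [FiniteDimensional ℂ E]
  {ι : Type*} {T : ι → Module.End ℂ E} {d : ℕ}

theorem exists_orthonormalBasis_apply_eq_smul_of_isSymmetric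
    (hT : ∀ i, (T i).IsSymmetric) (hC : Pairwise fun i j => Commute (T i) (T j))
    (hd : Module.finrank ℂ E = d) :
    ∃ (e : OrthonormalBasis (Fin d) ℂ E) (χ : Fin d → ι → ℂ), ∀ m i, T i (e m) = χ m i • e m := by
  classical
  have hO := orthogonalFamily_iInf_eigenspaces hT
  let := hO.independent.fintypeNeBotOfFiniteDimensional
  have hV := DirectSum.isInternal_ne_bot_iff.mpr (directSum_isInternal_of_pairwise_commute hT hC)
  have hO' := hO.comp
    (Subtype.val_injective (p := fun χ : ι → ℂ => ⨅ i, eigenspace (T i) (χ i) ≠ ⊥))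
  refine ⟨hV.subordinateOrthonormalBasis hd hO',
    fun m => (hV.subordinateOrthonormalBasisIndex hd m hO').1, fun m i => ?_⟩
  exact mem_eigenspace_iff.mp
    ((Submodule.mem_iInf _).mp (hV.subordinateOrthonormalBasis_subordinate hd m hO') i)

theorem exists_orthonormalBasis_apply_eq_smul_of_commute_star
    (hC : ∀ i j, Commute (T i) (T j)) (hC' : ∀ i j, Commute (star (T i)) (T j))
    (hd : Module.finrank ℂ E = d) :
    ∃ (e : OrthonormalBasis (Fin d) ℂ E) (χ : Fin d → ι → ℂ), ∀ m i, T i (e m) = χ m i • e m := by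
  let S : ι × Bool → Module.End ℂ E := fun i => if i.2 then ℑ (T i.1) else ℜ (T i.1)
  -- The real and imaginary parts commute because they lie in the star algebra generated by `T`.
  let A := StarAlgebra.adjoin ℂ (Set.range T)
  have hA : IsMulCommutative A := StarAlgebra.isMulCommutative_adjoin ℂ
    (by rintro _ ⟨i, rfl⟩ _ ⟨j, rfl⟩; exact (hC i j).eq)
    (by rintro _ ⟨i, rfl⟩ _ ⟨j, rfl⟩; exact (hC' j i).eq.symm)
  have hTA : ∀ i, T i ∈ A := fun i => StarAlgebra.subset_adjoin ℂ _ ⟨i, rfl⟩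
  have hSA : ∀ i, S i ∈ A := by
    rintro ⟨i, _ | _⟩
    · simp only [S, Bool.false_eq_true, if_false, realPart_apply_coe, ← Complex.coe_smul]
      exact A.smul_mem (add_mem (hTA i) (star_mem (hTA i))) _
    · simp only [S, if_true, imaginaryPart_apply_coe, ← Complex.coe_smul]
      exact A.smul_mem (A.smul_mem (sub_mem (hTA i) (star_mem (hTA i))) _) _
  have hS : ∀ i, (S i).IsSymmetric := fun i => by
    rw [LinearMap.isSymmetric_iff_isSelfAdjoint]
    by_cases h : i.2 <;> simp only [S, h] <;> exact Subtype.prop _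
  obtain ⟨e, χ, he⟩ := exists_orthonormalBasis_apply_eq_smul_of_isSymmetric hS
    (fun i j _ => congrArg Subtype.val (hA.is_comm.comm ⟨S i, hSA i⟩ ⟨S j, hSA j⟩)) hd
  refine ⟨e, fun m i => χ m (i, false) + Complex.I * χ m (i, true), fun m i => ?_⟩
  have hre := he m (i, false)
  have him := he m (i, true)
  simp only [S, Bool.false_eq_true, if_true, if_false] at hre him
  conv_lhs => rw [← realPart_add_I_smul_imaginaryPart (T i)]
  rw [LinearMap.add_apply, LinearMap.smul_apply, hre, him, smul_smul, add_smul]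

end JointEigenbasis

section Weyl

variable {F : Type*} [Field F] (ψ : AddChar F ℂ)

def weylOp (v : F × F) : Module.End ℂ (EuclideanSpace ℂ F) where
  toFun f := WithLp.toLp 2 fun x => ψ (v.2 * x) * f (x + v.1)
  map_add' f g := by ext x; simp [mul_add]
  map_smul' c f := by ext x; simp [mul_left_comm]

@[simp]
lemma weylOp_apply (v : F × F) (f : EuclideanSpace ℂ F) (x : F) :
    weylOp ψ v f x = ψ (v.2 * x) * f (x + v.1) := rfl

@[simp]
lemma weylOp_zero : weylOp ψ 0 = 1 := by
  ext f x; simp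

lemma weylOp_mul (v w : F × F) :
    weylOp ψ v * weylOp ψ w = ψ (v.1 * w.2) • weylOp ψ (v + w) := by
  ext f x
  simp only [Module.End.mul_apply, weylOp_apply, LinearMap.smul_apply, PiLp.smul_apply,
    Prod.fst_add, Prod.snd_add, smul_eq_mul, add_assoc, add_mul, mul_add, AddChar.map_add_eq_mul]
  rw [mul_comm w.2 v.1]
  ring

lemma weylOp_mul_comm (v w : F × F) :
    weylOp ψ v * weylOp ψ w = ψ (v.1 * w.2 - w.1 * v.2) • (weylOp ψ w * weylOp ψ v) := by
  rw [weylOp_mul, weylOp_mul, smul_smul, ← AddChar.map_add_eq_mul, sub_add_cancel, add_comm w]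

lemma commute_weylOp_smul (u : F × F) (t s : F) :
    Commute (weylOp ψ (t • u)) (weylOp ψ (s • u)) := by
  rw [Commute, SemiconjBy, weylOp_mul_comm]
  simp only [Prod.smul_fst, Prod.smul_snd, smul_eq_mul]
  rw [show t * u.1 * (s * u.2) - s * u.1 * (t * u.2) = 0 by ring, AddChar.map_zero_eq_one,
    one_smul]

variable [Fintype F]

lemma star_weylOp (v : F × F) : star (weylOp ψ v) = ψ (v.1 * v.2) • weylOp ψ (-v) := by
  refine ((LinearMap.eq_adjoint_iff _ _).mpr fun f g => ?_).symm
  simp only [PiLp.inner_apply, RCLike.inner_apply, LinearMap.smul_apply, PiLp.smul_apply,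
    weylOp_apply, smul_eq_mul, map_mul, ← AddChar.map_neg_eq_conj]
  refine Fintype.sum_equiv (Equiv.subRight v.1) _ _ fun x => ?_
  simp only [Equiv.subRight_apply, Prod.fst_neg, Prod.snd_neg, sub_add_cancel, ← sub_eq_add_neg]
  rw [← mul_assoc (ψ _), ← AddChar.map_add_eq_mul,
    show -(v.1 * v.2) + -(-v.2 * x) = v.2 * (x - v.1) by ring]
  ring

lemma star_weylOp_mul_self (v : F × F) : star (weylOp ψ v) * weylOp ψ v = 1 := by
  rw [star_weylOp, smul_mul_assoc, weylOp_mul, smul_smul, ← AddChar.map_add_eq_mul,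
    neg_add_cancel, weylOp_zero, Prod.fst_neg, neg_mul, mul_comm, add_neg_cancel,
    AddChar.map_zero_eq_one, one_smul]

lemma inner_weylOp_weylOp (v : F × F) (f g : EuclideanSpace ℂ F) :
    ⟪weylOp ψ v f, weylOp ψ v g⟫ = ⟪f, g⟫ := by
  rw [← LinearMap.adjoint_inner_right, ← LinearMap.star_eq_adjoint, ← Module.End.mul_apply,
    star_weylOp_mul_self, Module.End.one_apply]

lemma commute_star_weylOp_smul (u : F × F) (t s : F) :
    Commute (star (weylOp ψ (t • u))) (weylOp ψ (s • u)) := by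
  rw [star_weylOp, ← neg_smul]
  exact (commute_weylOp_smul ψ u (-t) s).smul_left _

lemma exists_orthonormalBasis_weylOp_smul_eq_smul (u : F × F) :
    ∃ (e : OrthonormalBasis (Fin (Fintype.card F)) ℂ (EuclideanSpace ℂ F))
      (χ : Matrix (Fin (Fintype.card F)) F ℂ), ∀ m t, weylOp ψ (t • u) (e m) = χ m t • e m :=
  exists_orthonormalBasis_apply_eq_smul_of_commute_star (commute_weylOp_smul ψ u)
    (commute_star_weylOp_smul ψ u) finrank_euclideanSpace

lemma trace_weylOp (hψ : ψ.IsPrimitive) {v : F × F} (hv : v ≠ 0) :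
    LinearMap.trace ℂ _ (weylOp ψ v) = 0 := by
  classical
  rw [LinearMap.trace_eq_sum_inner _ (EuclideanSpace.basisFun F ℂ)]
  simp only [EuclideanSpace.basisFun_apply, EuclideanSpace.inner_single_left, map_one, one_mul,
    weylOp_apply, PiLp.single_apply, add_eq_left]
  by_cases h1 : v.1 = 0
  · have h2 : v.2 ≠ 0 := fun h2 => hv (Prod.ext h1 h2)
    simpa [h1, mul_comm v.2, h2] using AddChar.sum_mulShift v.2 hψ
  · simp [h1]

lemma trace_star_weylOp_mul [DecidableEq F] (hψ : ψ.IsPrimitive) (v w : F × F) :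
    LinearMap.trace ℂ _ (star (weylOp ψ v) * weylOp ψ w) =
      if v = w then (Fintype.card F : ℂ) else 0 := by
  split_ifs with h
  · rw [h, star_weylOp_mul_self, LinearMap.trace_one, finrank_euclideanSpace]
  · rw [star_weylOp, smul_mul_assoc, weylOp_mul, map_smul, map_smul, neg_add_eq_sub,
      trace_weylOp ψ hψ (sub_ne_zero.mpr (Ne.symm h)), smul_zero, smul_zero]

lemma star_mul_self_eq_one_of_weylOp_apply_eq_smul {v : F × F} {f : EuclideanSpace ℂ F}
    (hf : f ≠ 0) {μ : ℂ} (h : weylOp ψ v f = μ • f) : starRingEnd ℂ μ * μ = 1 := by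
  have := inner_weylOp_weylOp ψ v f f
  rw [h, inner_smul_left, inner_smul_right, ← mul_assoc] at this
  exact mul_right_cancel₀ (inner_self_ne_zero.mpr hf) (this.trans (one_mul _).symm)

lemma inner_weylOp_eq_zero_of_apply_eq_smul {v w : F × F}
    (hvw : ψ (w.1 * v.2 - v.1 * w.2) ≠ 1) {f : EuclideanSpace ℂ F} {μ : ℂ}
    (h : weylOp ψ w f = μ • f) :
    ⟪f, weylOp ψ v f⟫ = 0 := by
  rcases eq_or_ne f 0 with rfl | hf
  · simp
  refine eq_zero_of_mul_eq_self_left hvw ?_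
  calc ψ (w.1 * v.2 - v.1 * w.2) * ⟪f, weylOp ψ v f⟫
      = starRingEnd ℂ μ * μ * (ψ (w.1 * v.2 - v.1 * w.2) * ⟪f, weylOp ψ v f⟫) := by
        rw [star_mul_self_eq_one_of_weylOp_apply_eq_smul ψ hf h, one_mul]
    _ = ⟪weylOp ψ w f, (weylOp ψ w * weylOp ψ v) f⟫ := by
        rw [weylOp_mul_comm, LinearMap.smul_apply, Module.End.mul_apply, h, map_smul,
          inner_smul_left, inner_smul_right, inner_smul_right]
        ring
    _ = ⟪f, weylOp ψ v f⟫ := inner_weylOp_weylOp ψ w f _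

lemma inner_weylOp_smul_self_eq_single [DecidableEq F] (hψ : ψ.IsPrimitive) {u w : F × F}
    (huw : w.1 * u.2 - u.1 * w.2 ≠ 0) {f : EuclideanSpace ℂ F} (hf : ‖f‖ = 1) {μ : F → ℂ}
    (h : ∀ s, weylOp ψ (s • w) f = μ s • f) (t : F) :
    ⟪f, weylOp ψ (t • u) f⟫ = (Pi.single 0 1 : F → ℂ) t := by
  rcases eq_or_ne t 0 with rfl | ht
  · simp [inner_self_eq_norm_sq_to_K, hf]
  obtain ⟨s, hs⟩ := AddChar.ne_one_iff.mp (hψ (mul_ne_zero ht huw))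
  rw [Pi.single_eq_of_ne ht]
  refine inner_weylOp_eq_zero_of_apply_eq_smul ψ ?_ (h s)
  have hω : s * w.1 * (t * u.2) - t * u.1 * (s * w.2) = t * (w.1 * u.2 - u.1 * w.2) * s := by
    ring
  simpa [hω] using hs

end Weyl

section Eigenvalues

variable {F ι : Type*} [Field F] [Fintype F] [Fintype ι] {ψ : AddChar F ℂ} {u : F × F}
  {e : OrthonormalBasis ι ℂ (EuclideanSpace ℂ F)} {χ : Matrix ι F ℂ}

lemma conjTranspose_mul_self_eq_smul_one [DecidableEq F] (hψ : ψ.IsPrimitive) (hu : u ≠ 0)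
    (he : ∀ m t, weylOp ψ (t • u) (e m) = χ m t • e m) :
    χᴴ * χ = (Fintype.card F : ℂ) • 1 := by
  ext t s
  calc (χᴴ * χ) t s = ∑ m, ⟪e m, (star (weylOp ψ (t • u)) * weylOp ψ (s • u)) (e m)⟫ := by
        refine Finset.sum_congr rfl fun m _ => ?_
        rw [Module.End.mul_apply, LinearMap.star_eq_adjoint, LinearMap.adjoint_inner_right, he,
          he, inner_smul_left, inner_smul_right, inner_self_eq_norm_sq_to_K, e.orthonormal.1 m]
        simp
    _ = _ := by
        have hinj : t • u = s • u ↔ t = s := (smul_left_injective F hu).eq_iff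
        rw [← LinearMap.trace_eq_sum_inner, trace_star_weylOp_mul ψ hψ]
        simp [hinj, Matrix.one_apply]

lemma mul_conjTranspose_self_eq_smul_one [DecidableEq F] [DecidableEq ι] (hψ : ψ.IsPrimitive)
    (hu : u ≠ 0) (he : ∀ m t, weylOp ψ (t • u) (e m) = χ m t • e m) :
    χ * χᴴ = (Fintype.card F : ℂ) • 1 := by
  have hF : (Fintype.card F : ℂ) ≠ 0 := Nat.cast_ne_zero.mpr Fintype.card_ne_zero
  have hinv : ((Fintype.card F : ℂ)⁻¹ • χᴴ) * χ = 1 := by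
    rw [Matrix.smul_mul, conjTranspose_mul_self_eq_smul_one hψ hu he, smul_smul,
      inv_mul_cancel₀ hF, one_smul]
  have := (Matrix.mul_eq_one_comm_of_equiv
    (e.toBasis.indexEquiv (EuclideanSpace.basisFun F ℂ).toBasis).symm).mp hinv
  rwa [Matrix.mul_smul, inv_smul_eq_iff₀ hF] at this

lemma eigenvalue_zero (he : ∀ m t, weylOp ψ (t • u) (e m) = χ m t • e m) (m : ι) :
    χ m 0 = 1 := by
  have h := he m 0
  rw [zero_smul, weylOp_zero, Module.End.one_apply] at h
  exact smul_left_injective ℂ (e.orthonormal.ne_zero m) (h.symm.trans (one_smul ℂ _).symm)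

lemma inner_weylOp_smul_self_eq_vecMul (he : ∀ m t, weylOp ψ (t • u) (e m) = χ m t • e m)
    (f : EuclideanSpace ℂ F) (t : F) :
    ⟪f, weylOp ψ (t • u) f⟫ = ((fun m => ⟪f, e m⟫ * ⟪e m, f⟫) ᵥ* χ) t := by
  nth_rewrite 2 [← e.sum_repr' f]
  simp only [map_sum, map_smul, he, smul_smul, inner_sum, inner_smul_right, Matrix.vecMul,
    dotProduct]
  exact Finset.sum_congr rfl fun m _ => by ring

lemma norm_inner_eq_of_inner_weylOp_smul_self [DecidableEq F] (hψ : ψ.IsPrimitive)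
    (hu : u ≠ 0) (he : ∀ m t, weylOp ψ (t • u) (e m) = χ m t • e m) {f : EuclideanSpace ℂ F}
    (hf : ∀ t, ⟪f, weylOp ψ (t • u) f⟫ = (Pi.single 0 1 : F → ℂ) t) (m : ι) :
    ‖⟪e m, f⟫‖ = 1 / √(Fintype.card F) := by
  classical
  set c : ι → ℂ := fun m => ⟪f, e m⟫ * ⟪e m, f⟫
  have hc : c ᵥ* χ = Pi.single 0 1 :=
    funext fun t => (inner_weylOp_smul_self_eq_vecMul he f t).symm.trans (hf t)
  have hcard : (Fintype.card F : ℂ) • c = 1 := by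
    calc (Fintype.card F : ℂ) • c = c ᵥ* (χ * χᴴ) := by
          rw [mul_conjTranspose_self_eq_smul_one hψ hu he, Matrix.vecMul_smul, Matrix.vecMul_one]
      _ = 1 := by
          ext m
          simp [← Matrix.vecMul_vecMul, hc, eigenvalue_zero he]
  have hsq : (Fintype.card F : ℝ) * ‖⟪e m, f⟫‖ ^ 2 = 1 := by
    have := congrFun hcard m
    simp only [c, Pi.smul_apply, smul_eq_mul, Pi.one_apply] at this
    rw [← inner_conj_symm f (e m), Complex.conj_mul'] at this
    exact_mod_cast this
  have hpos : 0 < ‖⟪e m, f⟫‖ := norm_pos_iff.mpr fun h => by simp [h] at hsq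
  rw [one_div, ← Real.sqrt_inv, eq_comm, Real.sqrt_eq_iff_mul_self_eq_of_pos hpos]
  field_simp
  linarith

end Eigenvalues

section Lines

variable {F : Type*} [Field F]

def lineDirection : Option F → F × F
  | none => (0, 1)
  | some m => (1, m)

lemma lineDirection_ne_zero (ℓ : Option F) : lineDirection ℓ ≠ 0 := by
  cases ℓ <;> simp [lineDirection]

lemma lineDirection_det_ne_zero {ℓ ℓ' : Option F} (h : ℓ ≠ ℓ') :
    (lineDirection ℓ').1 * (lineDirection ℓ).2 - (lineDirection ℓ).1 * (lineDirection ℓ').2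
      ≠ 0 := by
  cases ℓ <;> cases ℓ' <;> simp_all [lineDirection, sub_eq_zero, eq_comm]

end Lines

theorem exists_mutuallyUnbiased_orthonormalBases (F : Type*) [Field F] [Fintype F] :
    ∃ B : Option F → OrthonormalBasis (Fin (Fintype.card F)) ℂ (EuclideanSpace ℂ F),
      Pairwise fun ℓ ℓ' => ∀ i j, ‖⟪B ℓ i, B ℓ' j⟫‖ = 1 / √(Fintype.card F) := by
  classical
  obtain ⟨ψ, hψ1⟩ := AddChar.exists_apply_ne_zero.mpr (one_ne_zero : (1 : F) ≠ 0)
  have hψ : ψ.IsPrimitive := AddChar.IsPrimitive.of_ne_one (AddChar.ne_one_iff.mpr ⟨1, hψ1⟩)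
  choose B χ hB using fun ℓ : Option F =>
    exists_orthonormalBasis_weylOp_smul_eq_smul ψ (lineDirection ℓ)
  refine ⟨B, fun ℓ ℓ' h i j => norm_inner_eq_of_inner_weylOp_smul_self hψ
    (lineDirection_ne_zero ℓ) (hB ℓ) (fun t => ?_) i⟩
  exact inner_weylOp_smul_self_eq_single ψ hψ (lineDirection_det_ne_zero h)
    ((B ℓ').orthonormal.1 j) (hB ℓ' j) t

/-- If `d = p^n ≥ 2` is a prime power then a complete set of `d + 1` pairwise mutually
unbiased bases exists in `ℂ^d`. -/
theorem complete_mub_of_prime_power (d p n : ℕ) (hp : p.Prime) (hn : 1 ≤ n)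
    (hd : d = p ^ n) :
    ∃ B : Fin (d + 1) → OrthonormalBasis (Fin d) ℂ (EuclideanSpace ℂ (Fin d)),
      ∀ j k, j ≠ k → Unbiased (B j) (B k) := by
  have := Fact.mk hp
  let := Fintype.ofFinite (GaloisField p n)
  have hF : Fintype.card (GaloisField p n) = d := by
    rw [hd, ← GaloisField.card p n (by omega), Nat.card_eq_fintype_card]
  obtain ⟨B, hB⟩ := exists_mutuallyUnbiased_orthonormalBases (GaloisField p n)
  let L := LinearIsometryEquiv.piLpCongrLeft 2 ℂ ℂ (Fintype.equivFinOfCardEq hF)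
  let σ : Fin (d + 1) ≃ Option (GaloisField p n) := Fintype.equivOfCardEq (by simp [hF])
  refine ⟨fun j => ((B (σ j)).reindex (finCongr hF)).map L, fun j k hjk r s => ?_⟩
  simpa [hF] using hB (σ.injective.ne hjk) (Fin.cast hF.symm r) (Fin.cast hF.symm s)
end

section
/- (Delsarte's method) Let G be an abelian group (written additively), let Γ be a finite set of characters of G containing the trivial character γ₀, and let c : Γ → ℝ satisfy c(γ) ≥ 0 for all γ ∈ Γ and c(γ₀) = 1. Define h(x) = ∑_{γ∈Γ} c(γ)·γ(x) and assume h takes only real values. Let C ⊆ G be a set such that h(x) ≤ 0 for every x ∈ C. Then every finite subset B ⊆ G with the property that b − b' ∈ C for all distinct b, b' ∈ B satisfies |B| ≤ h(0) (note h(0) = ∑_{γ∈Γ} c(γ)). -/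
/-- **Delsarte's method.**  Let `Γ` be a finite set of characters of an abelian group `G`
containing the trivial character, let `c : Γ → ℝ` be nonnegative coefficients with the
coefficient of the trivial character equal to `1`, and let `h = ∑ γ ∈ Γ, c γ • γ` be
real-valued.  If `h ≤ 0` on a set `C`, then any finite set `B ⊆ G` all of whose differences
of distinct elements lie in `C` satisfies `|B| ≤ h 0`. -/
theorem delsarte_method {G : Type*} [AddCommGroup G]
    (Γ : Finset (AddChar G Circle)) (hΓ : (1 : AddChar G Circle) ∈ Γ)
    (c : AddChar G Circle → ℝ) (hc : ∀ γ ∈ Γ, 0 ≤ c γ) (hc0 : c 1 = 1)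
    (h : G → ℂ) (hdef : ∀ x, h x = ∑ γ ∈ Γ, (c γ : ℂ) * (γ x : ℂ))
    (hreal : ∀ x, (h x).im = 0)
    (C : Set G) (hC : ∀ x ∈ C, (h x).re ≤ 0)
    (B : Finset G) (hB : ∀ b ∈ B, ∀ b' ∈ B, b ≠ b' → b - b' ∈ C) :
    (B.card : ℝ) ≤ (h 0).re := by
  classical
  set S : ℂ := ∑ b ∈ B, ∑ b' ∈ B, h (b - b') with hS
  have key : ∀ γ : AddChar G Circle,
      ∑ b ∈ B, ∑ b' ∈ B, (γ (b - b') : ℂ)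
        = (Complex.normSq (∑ b ∈ B, (γ b : ℂ)) : ℂ) := by
    intro γ
    have hterm : ∀ b b' : G, (γ (b - b') : ℂ)
        = (γ b : ℂ) * (starRingEnd ℂ) (γ b' : ℂ) := by
      intro b b'
      rw [sub_eq_add_neg, AddChar.map_add_eq_mul, AddChar.map_neg_eq_inv,
        Circle.coe_mul, Circle.coe_inv_eq_conj]
    calc ∑ b ∈ B, ∑ b' ∈ B, (γ (b - b') : ℂ)
        = (∑ b ∈ B, (γ b : ℂ)) * (starRingEnd ℂ) (∑ b' ∈ B, (γ b' : ℂ)) := by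
          rw [Finset.sum_mul]
          refine Finset.sum_congr rfl fun b _ => ?_
          rw [map_sum, Finset.mul_sum]
          exact Finset.sum_congr rfl fun b' _ => hterm b b'
      _ = _ := Complex.mul_conj _
  have hSval : S = ∑ γ ∈ Γ, (c γ : ℂ) * (Complex.normSq (∑ b ∈ B, (γ b : ℂ)) : ℂ) := by
    calc S = ∑ b ∈ B, ∑ b' ∈ B, ∑ γ ∈ Γ, (c γ : ℂ) * (γ (b - b') : ℂ) := by
          rw [hS]; exact Finset.sum_congr rfl fun b _ =>
            Finset.sum_congr rfl fun b' _ => hdef _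
      _ = ∑ b ∈ B, ∑ γ ∈ Γ, ∑ b' ∈ B, (c γ : ℂ) * (γ (b - b') : ℂ) :=
          Finset.sum_congr rfl fun b _ => Finset.sum_comm
      _ = ∑ γ ∈ Γ, ∑ b ∈ B, ∑ b' ∈ B, (c γ : ℂ) * (γ (b - b') : ℂ) :=
          Finset.sum_comm
      _ = _ := by
          refine Finset.sum_congr rfl fun γ _ => ?_
          rw [← key γ, Finset.mul_sum]
          exact Finset.sum_congr rfl fun b _ => by rw [Finset.mul_sum]
  -- lower bound: card^2 ≤ Re S
  have hlow : (B.card : ℝ) ^ 2 ≤ S.re := by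
    have : S.re = ∑ γ ∈ Γ, c γ * Complex.normSq (∑ b ∈ B, (γ b : ℂ)) := by
      rw [hSval, Complex.re_sum]
      refine Finset.sum_congr rfl fun γ _ => ?_
      norm_num [Complex.mul_re]
    rw [this]
    have h1 : c 1 * Complex.normSq (∑ b ∈ B, ((1 : AddChar G Circle) b : ℂ))
        = (B.card : ℝ) ^ 2 := by
      simp [hc0, Complex.normSq_apply]
      ring
    calc (B.card : ℝ) ^ 2 = _ := h1.symm
      _ ≤ _ := Finset.single_le_sum (f := fun γ => c γ * Complex.normSq (∑ b ∈ B, (γ b : ℂ)))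
          (fun γ hγ => mul_nonneg (hc γ hγ) (Complex.normSq_nonneg _)) hΓ
  -- upper bound: Re S ≤ card * Re (h 0)
  have hup : S.re ≤ (B.card : ℝ) * (h 0).re := by
    have : S.re = ∑ b ∈ B, ∑ b' ∈ B, (h (b - b')).re := by
      rw [hS, Complex.re_sum]
      exact Finset.sum_congr rfl fun b _ => Complex.re_sum _ _
    rw [this]
    have hb : ∀ b ∈ B, ∑ b' ∈ B, (h (b - b')).re ≤ (h 0).re := by
      intro b hbB
      rw [← Finset.add_sum_erase _ _ hbB, sub_self]
      have : ∑ b' ∈ B.erase b, (h (b - b')).re ≤ 0 := by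
        refine Finset.sum_nonpos fun b' hb' => ?_
        exact hC _ (hB b hbB b' (Finset.mem_of_mem_erase hb')
          (Ne.symm (Finset.ne_of_mem_erase hb')))
      linarith
    calc ∑ b ∈ B, ∑ b' ∈ B, (h (b - b')).re ≤ ∑ _b ∈ B, (h 0).re :=
          Finset.sum_le_sum hb
      _ = (B.card : ℝ) * (h 0).re := by rw [Finset.sum_const, nsmul_eq_mul]
  -- h 0 re nonneg
  have h0 : (h 0).re = ∑ γ ∈ Γ, c γ := by
    rw [hdef, Complex.re_sum]
    exact Finset.sum_congr rfl fun γ _ => by simp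
  have h0nn : 0 ≤ (h 0).re := h0 ▸ Finset.sum_nonneg hc
  rcases Nat.eq_zero_or_pos B.card with hcard | hcard
  · simp [hcard, h0nn]
  · have hpos : (0 : ℝ) < B.card := by exact_mod_cast hcard
    nlinarith
end

section
/- Let A = {e_1,…,e_d} be an orthonormal basis of ℂ^d and let B = {c_1,…,c_{d²}} be a set of d² unit vectors, each unbiased to A, such that for all 1 ≤ j ≠ k ≤ d² the vectors c_j and c_k are either orthogonal or unbiased to each other. Form the d × d² matrix M with entries M_{j,t} = ⟨e_j, c_t⟩ (so each entry has modulus 1/√d, in particular is nonzero), and for 1 ≤ j ≠ k ≤ d define the vector r_{j/k} ∈ ℂ^{d²} by r_{j/k}(t) = M_{j,t}/M_{k,t}. Then: (i) for any two ordered pairs (j,k) ≠ (s,q) with j ≠ k and s ≠ q one has ⟨r_{j/k}, r_{s/q}⟩ = 0; and (ii) for every j ≠ k, ∑_{t=1}^{d²} r_{j/k}(t) = 0, i.e. r_{j/k} is orthogonal to the all-ones vector (1,1,…,1) ∈ ℂ^{d²}. In particular the d(d−1) vectors r_{j/k} together with the all-ones vector form a system of d(d−1)+1 pairwise orthogonal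 vectors in ℂ^{d²}. -/
/-!
Write `Q_t` for the off-diagonal part of the rank-one projector onto `c_t`, expressed in the
basis `e`: `Q_t (j, k) = M j t * conj (M k t)`. Since `|M j t|² = 1/d`, we have
`r_{j/k}(t) = d · Q_t (j, k)`, so the theorem says that the `d(d-1)` columns of the
`d² × d(d-1)` matrix `Q` are orthonormal and sum to zero.

The Gram matrix `H = Q Qᴴ` has entries `H_st = |⟨c_s, c_t⟩|² - 1/d`, which is `1 - 1/d` on
the diagonal and `-1/d` or `0` off it. In each case `H_st H_ts + H_st / d = δ_st H_tt`, and
summing gives `tr (H²) + (1/d) ∑_{s,t} H_st = tr H = d(d-1)`. As `tr (H²) = tr ((QᴴQ)²)`,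
this reads `‖QᴴQ - 1‖²_F + (1/d) ‖∑_t Q_t‖² = 0`, and both terms vanish.
-/

open scoped ComplexInnerProductSpace ComplexConjugate ComplexOrder

open Matrix

theorem Complex.mul_conj_of_norm_sq {z : ℂ} {a : ℝ} (hz : ‖z‖ ^ 2 = a) :
    z * conj z = a := by
  rw [← hz, Complex.mul_conj', Complex.ofReal_pow]

theorem sum_subtype_fst_ne_snd {m A : Type*} [Fintype m] [DecidableEq m] [AddCommGroup A]
    (f : m × m → A) :
    ∑ p : {p : m × m // p.1 ≠ p.2}, f p = ∑ j, ∑ k, f (j, k) - ∑ j, f (j, j) := by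
  rw [← Finset.sum_subtype (Finset.univ.filter fun p : m × m => p.1 ≠ p.2) (by simp),
    Finset.sum_filter, Fintype.sum_prod_type, eq_sub_iff_add_eq, ← Finset.sum_add_distrib]
  refine Finset.sum_congr rfl fun j _ => ?_
  rw [← Finset.sum_filter]
  dsimp only
  rw [Finset.filter_ne, Finset.sum_erase_add _ _ (Finset.mem_univ j)]

theorem conjTranspose_mul_self_eq_one_and_sum_eq_zero {T O : Type*} [Fintype T] [Fintype O]
    [DecidableEq O] (Q : Matrix T O ℂ) {c : ℝ} (hc : 0 < c)
    (htrace : (Q * Qᴴ).trace = Fintype.card O)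
    (hgram : ∑ s, ∑ t, ((Q * Qᴴ) s t * (Q * Qᴴ) t s + c * (Q * Qᴴ) s t) =
      (Q * Qᴴ).trace) :
    Qᴴ * Q = 1 ∧ ∀ p, ∑ t, Q t p = 0 := by
  set v : O → ℂ := fun p => ∑ t, Q t p
  have hsq : ((Qᴴ * Q) * (Qᴴ * Q)).trace = ∑ s, ∑ t, (Q * Qᴴ) s t * (Q * Qᴴ) t s := by
    rw [show (Qᴴ * Q) * (Qᴴ * Q) = Qᴴ * (Q * Qᴴ * Q) by simp only [Matrix.mul_assoc],
      trace_mul_comm, Matrix.mul_assoc]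
    set H := Q * Qᴴ
    simp only [trace, diag, mul_apply]
  have hsum : ∑ s, ∑ t, (Q * Qᴴ) s t = v ⬝ᵥ star v := by
    simp only [mul_apply, conjTranspose_apply, dotProduct, v, Pi.star_apply, star_sum,
      Finset.sum_mul_sum]
    exact (Finset.sum_congr rfl fun s _ => Finset.sum_comm).trans Finset.sum_comm
  have hzero : ((Qᴴ * Q - 1)ᴴ * (Qᴴ * Q - 1)).trace + c * (v ⬝ᵥ star v) = 0 := by
    simp only [conjTranspose_sub, conjTranspose_one, conjTranspose_mul,
      conjTranspose_conjTranspose, sub_mul, mul_sub, Matrix.mul_one, Matrix.one_mul, trace_sub,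
      trace_one, hsq, trace_mul_comm Qᴴ, ← hsum, htrace]
    simp only [Finset.sum_add_distrib, ← Finset.mul_sum, htrace] at hgram
    linear_combination hgram
  obtain ⟨hK, hv⟩ := (add_eq_zero_iff_of_nonneg
    (posSemidef_conjTranspose_mul_self _).trace_nonneg
    (mul_nonneg (by exact_mod_cast hc.le)
      (by rw [dotProduct_comm]; exact dotProduct_star_self_nonneg v))).1 hzero
  refine ⟨sub_eq_zero.1 (trace_conjTranspose_mul_self_eq_zero_iff.1 hK), fun p => ?_⟩
  exact congrFun (dotProduct_self_star_eq_zero.1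
    ((mul_eq_zero.1 hv).resolve_left (by exact_mod_cast hc.ne'))) p

section OffDiagOuter

variable {m T : Type*} [Fintype m]

def offDiagOuter (M : Matrix m T ℂ) : Matrix T {p : m × m // p.1 ≠ p.2} ℂ :=
  fun t p => M p.1.1 t * conj (M p.1.2 t)

theorem conjTranspose_mul_self_apply_self [Nonempty m] {M : Matrix m T ℂ}
    (hM : ∀ j t, ‖M j t‖ ^ 2 = (Fintype.card m : ℝ)⁻¹) (t : T) : (Mᴴ * M) t t = 1 := by
  simp only [mul_apply, conjTranspose_apply, Complex.star_def, ← mul_comm,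
    Complex.mul_conj_of_norm_sq (hM _ t), Finset.sum_const, Finset.card_univ, nsmul_eq_mul]
  push_cast
  field_simp

theorem offDiagOuter_mul_conjTranspose_apply [DecidableEq m] {M : Matrix m T ℂ}
    (hM : ∀ j t, ‖M j t‖ ^ 2 = (Fintype.card m : ℝ)⁻¹) (s t : T) :
    (offDiagOuter M * (offDiagOuter M)ᴴ) s t =
      ((‖(Mᴴ * M) s t‖ ^ 2 - (Fintype.card m : ℝ)⁻¹ : ℝ) : ℂ) := by
  rw [mul_apply]
  simp only [conjTranspose_apply, offDiagOuter]
  rw [sum_subtype_fst_ne_snd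
    (fun p => M p.1 s * conj (M p.2 s) * star (M p.1 t * conj (M p.2 t)))]
  have hfull : ∑ j, ∑ k, M j s * conj (M k s) * star (M j t * conj (M k t))
      = ‖(Mᴴ * M) s t‖ ^ 2 := by
    rw [← Complex.mul_conj', mul_comm, mul_apply, map_sum, Finset.sum_mul_sum]
    refine Finset.sum_congr rfl fun j _ => Finset.sum_congr rfl fun k _ => ?_
    simp only [conjTranspose_apply, Complex.star_def, map_mul, Complex.conj_conj]
    ring
  have hdiag : ∑ j, M j s * conj (M j s) * star (M j t * conj (M j t))
      = ((Fintype.card m : ℝ)⁻¹ : ℂ) := by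
    have hterm : ∀ j, M j s * conj (M j s) * star (M j t * conj (M j t))
        = (((Fintype.card m : ℝ)⁻¹ * (Fintype.card m : ℝ)⁻¹ : ℝ) : ℂ) := fun j => by
      rw [Complex.star_def, Complex.mul_conj_of_norm_sq (hM j s),
        Complex.mul_conj_of_norm_sq (hM j t), Complex.conj_ofReal, Complex.ofReal_mul]
    simp only [hterm, Finset.sum_const, Finset.card_univ, nsmul_eq_mul]
    push_cast
    rcases eq_or_ne (Fintype.card m : ℂ) 0 with hn | hn
    · simp [hn]
    · field_simp
  rw [hfull, hdiag]
  push_cast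
  ring

theorem conjTranspose_offDiagOuter_mul_self_eq_one_and_sum_eq_zero [DecidableEq m] [Fintype T]
    [Nonempty m] {M : Matrix m T ℂ} (hM : ∀ j t, ‖M j t‖ ^ 2 = (Fintype.card m : ℝ)⁻¹)
    (hG : ∀ s t, s ≠ t →
      (Mᴴ * M) s t = 0 ∨ ‖(Mᴴ * M) s t‖ ^ 2 = (Fintype.card m : ℝ)⁻¹)
    (hT : Fintype.card T = Fintype.card m ^ 2) :
    (offDiagOuter M)ᴴ * offDiagOuter M = 1 ∧ ∀ p, ∑ t, offDiagOuter M t p = 0 := by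
  classical
  set Q := offDiagOuter M
  have hH := offDiagOuter_mul_conjTranspose_apply hM
  have hdiag : ∀ t, (Q * Qᴴ) t t = ((1 - (Fintype.card m : ℝ)⁻¹ : ℝ) : ℂ) := by
    intro t
    rw [hH, conjTranspose_mul_self_apply_self hM, norm_one, one_pow]
  have hcard : (Fintype.card {p : m × m // p.1 ≠ p.2} : ℂ)
      = Fintype.card m ^ 2 - Fintype.card m := by
    rw [Fintype.card_eq_sum_ones, Nat.cast_sum, Nat.cast_one,
      sum_subtype_fst_ne_snd (fun _ => 1)]
    simp [sq]
  generalize hn : Fintype.card m = n at hM hG hT hH hdiag hcard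
  have hn0 : 0 < n := hn ▸ Fintype.card_pos
  have hentry : ∀ s t, (Q * Qᴴ) s t * (Q * Qᴴ) t s + ((n : ℝ)⁻¹ : ℝ) * (Q * Qᴴ) s t
      = if s = t then (Q * Qᴴ) t t else 0 := by
    intro s t
    rcases eq_or_ne s t with rfl | hst
    · rw [if_pos rfl, hdiag]
      push_cast
      field_simp
      ring
    · rw [if_neg hst, hH, hH, ← (isHermitian_conjTranspose_mul_self M).apply t s,
        norm_star]
      rcases hG s t hst with h | h
      · rw [h, norm_zero]
        push_cast
        field_simp
        ring
      · rw [h]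
        push_cast
        ring
  have htrace : (Q * Qᴴ).trace = Fintype.card {p : m × m // p.1 ≠ p.2} := by
    simp only [trace, diag, hdiag, Finset.sum_const, Finset.card_univ, hT, nsmul_eq_mul,
      hcard]
    push_cast
    field_simp
  refine conjTranspose_mul_self_eq_one_and_sum_eq_zero Q (c := (n : ℝ)⁻¹)
    (inv_pos.2 (by exact_mod_cast hn0)) htrace ?_
  simp only [hentry, Finset.sum_ite_eq, Finset.mem_univ, if_true, trace, diag]

end OffDiagOuter

theorem row_quotients_orthogonal_general (d : ℕ)
    (e : OrthonormalBasis (Fin d) ℂ (EuclideanSpace ℂ (Fin d)))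
    (c : Fin (d ^ 2) → EuclideanSpace ℂ (Fin d))
    (hunb : ∀ t k, ‖⟪c t, e k⟫‖ = 1 / Real.sqrt d)
    (horth : ∀ t t', t ≠ t' → ⟪c t, c t'⟫ = 0 ∨ ‖⟪c t, c t'⟫‖ = 1 / Real.sqrt d)
    (M : Fin d → Fin (d ^ 2) → ℂ) (hM : ∀ j t, M j t = ⟪e j, c t⟫)
    (r : Fin d → Fin d → Fin (d ^ 2) → ℂ) (hr : ∀ j k t, r j k t = M j t / M k t) :
    (∀ j k s q : Fin d, j ≠ k → s ≠ q → (j, k) ≠ (s, q) →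
        ∑ t, conj (r j k t) * r s q t = 0) ∧
      (∀ j k : Fin d, j ≠ k → ∑ t, r j k t = 0) := by
  rcases isEmpty_or_nonempty (Fin d) with hd | hd
  · exact ⟨fun j => isEmptyElim j, fun j => isEmptyElim j⟩
  have hnorm_sq : ∀ z : ℂ, ‖z‖ = 1 / Real.sqrt d →
      ‖z‖ ^ 2 = (Fintype.card (Fin d) : ℝ)⁻¹ := fun z hz => by
    rw [hz, div_pow, one_pow, Real.sq_sqrt (Nat.cast_nonneg d), Fintype.card_fin, one_div]
  have hMnorm : ∀ j t, ‖M j t‖ ^ 2 = (Fintype.card (Fin d) : ℝ)⁻¹ := fun j t =>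
    hnorm_sq _ (by rw [hM, norm_inner_symm, hunb])
  have hgram : ∀ s t, ((of M)ᴴ * of M) s t = ⟪c s, c t⟫ := fun s t => by
    simp only [mul_apply, conjTranspose_apply, of_apply, hM, Complex.star_def,
      inner_conj_symm]
    exact e.sum_inner_mul_inner _ _
  obtain ⟨hK, hsum⟩ := conjTranspose_offDiagOuter_mul_self_eq_one_and_sum_eq_zero
    (M := of M) hMnorm
    (fun s t hst => by simpa only [hgram] using (horth s t hst).imp_right (hnorm_sq _)) (by simp)
  have hr' : ∀ j k (hjk : j ≠ k) t, r j k t = d * offDiagOuter (of M) t ⟨(j, k), hjk⟩ := by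
    intro j k hjk t
    rw [hr, div_eq_mul_inv, Complex.inv_def, Complex.normSq_eq_norm_sq, hMnorm, inv_inv,
      Fintype.card_fin]
    simp only [offDiagOuter, of_apply]
    push_cast
    ring
  refine ⟨fun j k s q hjk hsq hne => ?_, fun j k hjk => ?_⟩
  · have hcol := congrFun (congrFun hK ⟨(j, k), hjk⟩) ⟨(s, q), hsq⟩
    rw [mul_apply, one_apply_ne (by simpa using hne)] at hcol
    have hterm : ∀ t, conj (r j k t) * r s q t = d ^ 2 *
        ((offDiagOuter (of M))ᴴ ⟨(j, k), hjk⟩ t * offDiagOuter (of M) t ⟨(s, q), hsq⟩) :=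
      fun t => by
        rw [hr' _ _ hjk, hr' _ _ hsq, conjTranspose_apply, Complex.star_def, map_mul,
          Complex.conj_natCast]
        ring
    rw [Finset.sum_congr rfl fun t _ => hterm t, ← Finset.mul_sum, hcol, mul_zero]
  · rw [Finset.sum_congr rfl fun t _ => hr' j k hjk t, ← Finset.mul_sum, hsum, mul_zero]

/-- If `B = {c_1, …, c_{d²}}` consists of `d²` distinct unit vectors in `ℂ^d`, all unbiased
to a fixed orthonormal basis `e`, and pairwise either orthogonal or unbiased, then the
coordinatewise quotients `r_{j/k}` of distinct rows of the `d × d²` matrix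
`M (j, t) = ⟪e j, c t⟫` are pairwise orthogonal in `ℂ^{d²}` and are all orthogonal to the
all-ones vector. -/
theorem row_quotients_orthogonal (d : ℕ)
    (e : OrthonormalBasis (Fin d) ℂ (EuclideanSpace ℂ (Fin d)))
    (c : Fin (d ^ 2) → EuclideanSpace ℂ (Fin d)) (hinj : Function.Injective c)
    (hunit : ∀ t, ‖c t‖ = 1)
    (hunb : ∀ t k, ‖⟪c t, e k⟫‖ = 1 / Real.sqrt d)
    (horth : ∀ t t', t ≠ t' → ⟪c t, c t'⟫ = 0 ∨ ‖⟪c t, c t'⟫‖ = 1 / Real.sqrt d)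
    (M : Fin d → Fin (d ^ 2) → ℂ) (hM : ∀ j t, M j t = ⟪e j, c t⟫)
    (r : Fin d → Fin d → Fin (d ^ 2) → ℂ) (hr : ∀ j k t, r j k t = M j t / M k t) :
    (∀ j k s q : Fin d, j ≠ k → s ≠ q → (j, k) ≠ (s, q) →
        ∑ t, conj (r j k t) * r s q t = 0) ∧
      (∀ j k : Fin d, j ≠ k → ∑ t, r j k t = 0) :=
  row_quotients_orthogonal_general d e c hunb horth M hM r hr
end

section
/- Let d ≥ 2 and let f : T^{d−1} → ℝ be a finitely supported function such that: f(y) ≥ 0 for all y; the support of f is contained in ORT_d ∪ UB_d ∪ {0}; f(0) > 0; and for every γ ∈ ℤ^{d−1} the finite exponential sum f̂(γ) = ∑_y f(y) e^{2πi⟨γ,y⟩} is a nonnegative real number. Then ∑_y f(y) ≤ d² · f(0). -/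
/-! Put `v = (0, e_1, …, e_{d-1})` and `T(y) = 1 + ∑_j e^{2πi y_j}`. For each `y`, the sum of
`e^{2πi⟨γ,y⟩}` over the frequencies `γ = v_a - v_b + v_c - v_e` with `c ≠ e` factors as
`|T(y)|² (|T(y)|² - d)`, which vanishes on `ORT_d ∪ UB_d` and equals `d²(d² - d)` at `y = 0`.
So the sum of `f̂(γ)` over these quadruples is `f(0) d²(d² - d)`. As every `f̂(γ)` is
nonnegative, that sum is at least its `d² - d` terms with `a = e`, `b = c`, where `γ = 0` and
`f̂(0) = ∑_y f(y)`. -/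

/-- `e^{2πi y}` for a point `y` of the torus `ℝ/ℤ`. -/
noncomputable def torusExp (y : AddCircle (1 : ℝ)) : ℂ := (AddCircle.toCircle y : ℂ)

/-- The set `ORT_d ⊆ T^{d-1}` of points `α` with `1 + ∑_j e^{2πi α_j} = 0`. -/
noncomputable def ORT (d : ℕ) : Set (Fin (d - 1) → AddCircle (1 : ℝ)) :=
  {α | 1 + ∑ j, torusExp (α j) = 0}

/-- The set `UB_d ⊆ T^{d-1}` of points `α` with `|1 + ∑_j e^{2πi α_j}| = √d`. -/
noncomputable def UB (d : ℕ) : Set (Fin (d - 1) → AddCircle (1 : ℝ)) :=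
  {α | ‖1 + ∑ j, torusExp (α j)‖ = Real.sqrt d}

open Finset

section QuadrupleSum

variable {A ι : Type*} [AddCommGroup A] [Fintype ι]

def quadrupleSum {M : Type*} [AddCommMonoid M] (F : A → M) (v : ι → A) : M :=
  ∑ p ∈ univ.offDiag, ∑ q : ι × ι, F (v q.1 - v q.2 + (v p.1 - v p.2))

lemma quadrupleSum_sum_mul {X : Type*} (s : Finset X) (c : X → ℂ) (F : X → A → ℂ) (v : ι → A) :
    quadrupleSum (fun γ => ∑ x ∈ s, c x * F x γ) v = ∑ x ∈ s, c x * quadrupleSum (F x) v := by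
  simp only [quadrupleSum, mul_sum]
  rw [sum_comm (s := s)]
  exact sum_congr rfl fun p _ => sum_comm

lemma card_offDiag_mul_re_le_re_quadrupleSum (F : A → ℂ) (hF : ∀ γ, 0 ≤ (F γ).re) (v : ι → A) :
    (#(univ : Finset ι).offDiag : ℝ) * (F 0).re ≤ (quadrupleSum F v).re := by
  rw [← nsmul_eq_mul, quadrupleSum, Complex.re_sum]
  refine card_nsmul_le_sum _ _ _ fun p _ => ?_
  calc (F 0).re = (F (v p.2 - v p.1 + (v p.1 - v p.2))).re := by simp
    _ ≤ (∑ q : ι × ι, F (v q.1 - v q.2 + (v p.1 - v p.2))).re := by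
      rw [Complex.re_sum]
      exact single_le_sum (f := fun q : ι × ι => (F (v q.1 - v q.2 + (v p.1 - v p.2))).re)
        (fun q _ => hF _) (mem_univ p.swap)

end QuadrupleSum

section AddChar

variable {A ι : Type*} [AddCommGroup A] [Fintype ι] (ψ : AddChar A Circle) (v : ι → A)

lemma sum_addChar_sub_eq_norm_sq :
    ∑ q : ι × ι, (ψ (v q.1 - v q.2) : ℂ) = (‖∑ i, (ψ (v i) : ℂ)‖ ^ 2 : ℝ) := by
  push_cast
  rw [← Complex.mul_conj', map_sum, sum_mul_sum, ← univ_product_univ, sum_product]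
  simp only [AddChar.map_sub_eq_div, div_eq_mul_inv, Circle.coe_mul, Circle.coe_inv_eq_conj]

lemma sum_offDiag_addChar_sub_eq [DecidableEq ι] :
    ∑ p ∈ univ.offDiag, (ψ (v p.1 - v p.2) : ℂ) =
      (‖∑ i, (ψ (v i) : ℂ)‖ ^ 2 : ℝ) - Fintype.card ι := by
  rw [← sum_addChar_sub_eq_norm_sq, ← univ_product_univ, ← diag_union_offDiag,
    sum_union (disjoint_diag_offDiag _), sum_diag]
  simp

lemma quadrupleSum_addChar [DecidableEq ι] :
    quadrupleSum (fun a => (ψ a : ℂ)) v =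
      (‖∑ i, (ψ (v i) : ℂ)‖ ^ 2 : ℝ) * ((‖∑ i, (ψ (v i) : ℂ)‖ ^ 2 : ℝ) - Fintype.card ι) := by
  rw [quadrupleSum, ← sum_offDiag_addChar_sub_eq, ← sum_addChar_sub_eq_norm_sq, sum_mul_sum,
    sum_comm]
  simp [AddChar.map_add_eq_mul]

end AddChar

noncomputable def torusChar {N : ℕ} (y : Fin N → AddCircle (1 : ℝ)) :
    AddChar (Fin N → ℤ) Circle where
  toFun γ := ∏ j, AddCircle.toCircle (γ j • y j)
  map_zero_eq_one' := by simp
  map_add_eq_mul' γ δ := by simp [add_zsmul, AddCircle.toCircle_add, prod_mul_distrib]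

lemma torusChar_apply {N : ℕ} (y : Fin N → AddCircle (1 : ℝ)) (γ : Fin N → ℤ) :
    torusChar y γ = ∏ j, AddCircle.toCircle (γ j • y j) :=
  rfl

lemma coe_torusChar {N : ℕ} (y : Fin N → AddCircle (1 : ℝ)) (γ : Fin N → ℤ) :
    (torusChar y γ : ℂ) = ∏ j, torusExp (γ j • y j) :=
  map_prod Circle.coeHom _ _

lemma torusChar_single {N : ℕ} (y : Fin N → AddCircle (1 : ℝ)) (j : Fin N) :
    torusChar y (Pi.single j 1) = AddCircle.toCircle (y j) := by
  rw [torusChar_apply, prod_eq_single j (fun k _ hk => by simp [Pi.single_eq_of_ne hk]) (by simp)]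
  simp

def zeroAndBasis (N : ℕ) : Option (Fin N) → Fin N → ℤ
  | none => 0
  | some j => Pi.single j 1

lemma sum_torusChar_zeroAndBasis {N : ℕ} (y : Fin N → AddCircle (1 : ℝ)) :
    ∑ i, (torusChar y (zeroAndBasis N i) : ℂ) = 1 + ∑ j, torusExp (y j) := by
  simp [Fintype.sum_option, zeroAndBasis, torusChar_single, torusExp]

lemma quadrupleSum_torusChar {d : ℕ} (hd : 1 ≤ d) (y : Fin (d - 1) → AddCircle (1 : ℝ)) :
    quadrupleSum (fun γ => (torusChar y γ : ℂ)) (zeroAndBasis (d - 1)) =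
      (‖1 + ∑ j, torusExp (y j)‖ ^ 2 : ℝ) * ((‖1 + ∑ j, torusExp (y j)‖ ^ 2 : ℝ) - d) := by
  classical
  rw [quadrupleSum_addChar, sum_torusChar_zeroAndBasis, Fintype.card_option, Fintype.card_fin,
    Nat.sub_add_cancel hd]

lemma quadrupleSum_torusChar_eq_zero {d : ℕ} (hd : 1 ≤ d) {y : Fin (d - 1) → AddCircle (1 : ℝ)}
    (hy : y ∈ ORT d ∪ UB d) :
    quadrupleSum (fun γ => (torusChar y γ : ℂ)) (zeroAndBasis (d - 1)) = 0 := by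
  rw [quadrupleSum_torusChar hd]
  rcases hy with hy | hy <;> simp [hy.out]

lemma quadrupleSum_torusChar_zero {d : ℕ} (hd : 1 ≤ d) :
    quadrupleSum (fun γ => (torusChar (0 : Fin (d - 1) → AddCircle (1 : ℝ)) γ : ℂ))
      (zeroAndBasis (d - 1)) = (d : ℂ) ^ 2 * ((d : ℂ) ^ 2 - d) := by
  have h : (1 : ℂ) + ∑ j : Fin (d - 1), torusExp 0 = d := by
    simp [torusExp, Nat.cast_sub hd]
  simp only [quadrupleSum_torusChar hd, Pi.zero_apply, h]
  simp

lemma quadrupleSum_weighted_torusChar {d : ℕ} (hd : 1 ≤ d)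
    (f : (Fin (d - 1) → AddCircle (1 : ℝ)) →₀ ℝ)
    (hsupp : ∀ y ∈ f.support, y ∈ ORT d ∪ UB d ∪ {0}) :
    quadrupleSum (fun γ => ∑ y ∈ f.support, (f y : ℂ) * torusChar y γ) (zeroAndBasis (d - 1)) =
      (f 0 * ((d : ℝ) ^ 2 * ((d : ℝ) ^ 2 - d)) : ℝ) := by
  rw [quadrupleSum_sum_mul, sum_eq_single 0, quadrupleSum_torusChar_zero hd]
  · push_cast
    rfl
  · intro y hy hy0
    have hy' : y ∈ ORT d ∪ UB d := (hsupp y hy).resolve_right hy0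
    rw [quadrupleSum_torusChar_eq_zero hd hy', mul_zero]
  · intro h0
    rw [Finsupp.notMem_support_iff.1 h0, Complex.ofReal_zero, zero_mul]

theorem pseudo_mub_bound_general (d : ℕ) (hd : 2 ≤ d)
    (f : (Fin (d - 1) → AddCircle (1 : ℝ)) →₀ ℝ)
    (hsupp : ∀ y ∈ f.support, y ∈ ORT d ∪ UB d ∪ {0})
    (hhat : ∀ γ : Fin (d - 1) → ℤ,
        ((∑ y ∈ f.support, (f y : ℂ) * ∏ j, torusExp (γ j • y j)).im = 0 ∧
          0 ≤ (∑ y ∈ f.support, (f y : ℂ) * ∏ j, torusExp (γ j • y j)).re)) :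
    ∑ y ∈ f.support, f y ≤ (d : ℝ) ^ 2 * f 0 := by
  set F : (Fin (d - 1) → ℤ) → ℂ := fun γ => ∑ y ∈ f.support, (f y : ℂ) * torusChar y γ
  have hF : ∀ γ, 0 ≤ (F γ).re := fun γ => by simpa only [F, coe_torusChar] using (hhat γ).2
  have hF0 : F 0 = ((∑ y ∈ f.support, f y : ℝ) : ℂ) := by simp [F]
  have hcard : (#(univ : Finset (Option (Fin (d - 1)))).offDiag : ℝ) = d ^ 2 - d := by
    rw [offDiag_card, card_univ, Fintype.card_option, Fintype.card_fin,
      Nat.sub_add_cancel (by omega), Nat.cast_sub (Nat.le_mul_self d)]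
    push_cast
    ring
  have key := card_offDiag_mul_re_le_re_quadrupleSum F hF (zeroAndBasis (d - 1))
  rw [hcard, hF0, quadrupleSum_weighted_torusChar (by omega) f hsupp, Complex.ofReal_re,
    Complex.ofReal_re] at key
  have hd' : (0 : ℝ) < d ^ 2 - d := by
    have h2 : (2 : ℝ) ≤ d := by exact_mod_cast hd
    nlinarith
  exact le_of_mul_le_mul_left (key.trans_eq (by ring)) hd'

/-- If `f : T^{d-1} → ℝ` is a nonnegative finitely supported function, supported on
`ORT_d ∪ UB_d ∪ {0}`, with `f(0) > 0` and all exponential sums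
`f̂(γ) = ∑_y f(y) e^{2πi⟨γ,y⟩}` nonnegative reals, then `∑_y f(y) ≤ d² · f(0)`. -/
theorem pseudo_mub_bound (d : ℕ) (hd : 2 ≤ d)
    (f : (Fin (d - 1) → AddCircle (1 : ℝ)) →₀ ℝ)
    (hpos : ∀ y, 0 ≤ f y)
    (hsupp : ∀ y ∈ f.support, y ∈ ORT d ∪ UB d ∪ {0})
    (h0 : 0 < f 0)
    (hhat : ∀ γ : Fin (d - 1) → ℤ,
        ((∑ y ∈ f.support, (f y : ℂ) * ∏ j, torusExp (γ j • y j)).im = 0 ∧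
          0 ≤ (∑ y ∈ f.support, (f y : ℂ) * ∏ j, torusExp (γ j • y j)).re)) :
    ∑ y ∈ f.support, f y ≤ (d : ℝ) ^ 2 * f 0 :=
  pseudo_mub_bound_general d hd f hsupp hhat
end

section
/- If there exists a complete set of d+1 pairwise mutually unbiased orthonormal bases of ℂ^d, then there exists a complete-pseudo-MUB-system in dimension d, i.e. a finitely supported function f : T^{d−1} → ℝ such that: f(y) ≥ 0 for all y; the support of f is contained in ORT_d ∪ UB_d ∪ {0}; f(0) = d²; ∑_y f(y) = d⁴; and for every γ ∈ ℤ^{d−1} the finite exponential sum ∑_y f(y) e^{2πi⟨γ,y⟩} is a nonnegative real number. -/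
/-!
Fix the basis `B 0`. Every vector `v` of the other `d` bases has all its coordinates in `B 0`
of modulus `1/√d`, and we record it by the point `x_v ∈ T^{d-1}` of phases of its coordinates
relative to the first one. Multiplying out the coordinates gives
`|1 + ∑_j e^{2πi (x_v - x_w)_j}| = d |⟨v, w⟩|`, which is `0` for distinct vectors of one basis
and `√d` for vectors of two different bases. Hence `f = ∑_{v, w} δ_{x_v - x_w}` is supported in
`ORT_d ∪ UB_d ∪ {0}`, has mass `d²` at `0` (the `x_v` are distinct) and total mass `d⁴`, and its
Fourier coefficient at `γ` is `|∑_v e^{2πi⟨γ, x_v⟩}|² ≥ 0`.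
-/

open scoped ComplexInnerProductSpace

open Complex ComplexConjugate

section Torus

lemma torusExp_add (a b : AddCircle (1 : ℝ)) :
    torusExp (a + b) = torusExp a * torusExp b := by
  simp [torusExp, AddCircle.toCircle_add]

lemma torusExp_zero : torusExp 0 = 1 := by
  simp [torusExp]

lemma torusExp_neg (a : AddCircle (1 : ℝ)) : torusExp (-a) = conj (torusExp a) := by
  rw [torusExp, AddCircle.toCircle_neg, Circle.coe_inv_eq_conj, torusExp]

lemma torusExp_sub (a b : AddCircle (1 : ℝ)) :
    torusExp (a - b) = torusExp a * conj (torusExp b) := by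
  rw [sub_eq_add_neg, torusExp_add, torusExp_neg]

lemma norm_torusExp (a : AddCircle (1 : ℝ)) : ‖torusExp a‖ = 1 :=
  Circle.norm_coe _

noncomputable def torusArg (z : ℂ) : AddCircle (1 : ℝ) := (arg z / (2 * Real.pi) : ℝ)

lemma norm_mul_torusExp_torusArg (z : ℂ) : ‖z‖ * torusExp (torusArg z) = z := by
  rw [torusExp, torusArg, AddCircle.toCircle_apply_mk, Circle.coe_exp]
  convert norm_mul_exp_arg_mul_I z using 4
  push_cast
  field_simp

lemma prod_torusExp_zsmul_sub {n : ℕ} (γ : Fin n → ℤ) (a b : Fin n → AddCircle (1 : ℝ)) :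
    ∏ j, torusExp (γ j • (a j - b j)) =
      (∏ j, torusExp (γ j • a j)) * conj (∏ j, torusExp (γ j • b j)) := by
  simp only [map_prod, ← Finset.prod_mul_distrib, smul_sub, torusExp_sub]

def reducedPhase {n : ℕ} (a : Fin (n + 1) → AddCircle (1 : ℝ)) : Fin n → AddCircle (1 : ℝ) :=
  fun j => a j.succ - a 0

lemma one_add_sum_torusExp_reducedPhase_sub {n : ℕ} (a b : Fin (n + 1) → AddCircle (1 : ℝ)) :
    1 + ∑ j, torusExp ((reducedPhase a - reducedPhase b) j) =
      torusExp (b 0 - a 0) * ∑ i, torusExp (a i - b i) := by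
  rw [Fin.sum_univ_succ, mul_add, Finset.mul_sum, ← torusExp_add, add_comm (b 0 - a 0),
    sub_add_sub_cancel, sub_self, torusExp_zero]
  congr 2 with j
  rw [← torusExp_add]
  congr 1
  simp only [reducedPhase, Pi.sub_apply]
  abel

end Torus

lemma zero_notMem_ORT_union_UB {d : ℕ} (hd : 2 ≤ d) : 0 ∉ ORT d ∪ UB d := by
  have hzero : 1 + ∑ _j : Fin (d - 1), torusExp 0 = ((d : ℝ) : ℂ) := by
    simp only [torusExp_zero, Finset.sum_const, Finset.card_univ, Fintype.card_fin,
      nsmul_eq_mul, mul_one]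
    rw [Nat.cast_sub (by omega)]
    push_cast
    ring
  have hd' : (2 : ℝ) ≤ d := by exact_mod_cast hd
  rintro (hort | hub)
  · have : ((d : ℝ) : ℂ) = 0 := hzero ▸ hort
    norm_cast at this
    omega
  · have : ‖((d : ℝ) : ℂ)‖ = Real.sqrt d := hzero ▸ hub
    rw [norm_real, Real.norm_of_nonneg (by positivity)] at this
    have hsq : (d : ℝ) ^ 2 = d := by
      nth_rewrite 1 [this]
      exact Real.sq_sqrt (by positivity)
    nlinarith

section DifferenceCount

variable {G ι : Type*} [AddCommGroup G] [Fintype ι] (x : ι → G)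

noncomputable def differenceCount : G →₀ ℝ :=
  ∑ p, ∑ q, Finsupp.single (x p - x q) 1

lemma differenceCount_apply [DecidableEq G] (y : G) :
    differenceCount x y = ∑ p, ∑ q, if x p - x q = y then 1 else 0 := by
  simp only [differenceCount, Finsupp.finsetSum_apply, Finsupp.single_apply]

lemma differenceCount_nonneg (y : G) : 0 ≤ differenceCount x y := by
  classical
  rw [differenceCount_apply]
  exact Finset.sum_nonneg fun p _ => Finset.sum_nonneg fun q _ => by split_ifs <;> norm_num

lemma exists_sub_eq_of_mem_support_differenceCount {y : G}
    (hy : y ∈ (differenceCount x).support) : ∃ p q, x p - x q = y := by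
  classical
  by_contra! h
  simp [differenceCount_apply, h] at hy

lemma differenceCount_zero_of_injective (hx : Function.Injective x) :
    differenceCount x 0 = Fintype.card ι := by
  classical
  simp [differenceCount_apply, sub_eq_zero, hx.eq_iff]

lemma sum_differenceCount {M : Type*} [AddCommMonoid M] (h : G → ℝ → M)
    (h_zero : ∀ y, h y 0 = 0) (h_add : ∀ y r s, h y (r + s) = h y r + h y s) :
    (differenceCount x).sum h = ∑ p, ∑ q, h (x p - x q) 1 := by
  simp only [differenceCount, ← Finsupp.sum_finsetSum_index h_zero h_add,
    Finsupp.sum_single_index (h_zero _)]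

lemma sum_support_differenceCount :
    ∑ y ∈ (differenceCount x).support, differenceCount x y = Fintype.card ι ^ 2 := by
  change (differenceCount x).sum (fun _ r => r) = _
  rw [sum_differenceCount x (fun _ r => r) (fun _ => rfl) (fun _ _ _ => rfl)]
  simp [sq]

end DifferenceCount

lemma sum_differenceCount_mul_prod_torusExp {n : ℕ} {ι : Type*} [Fintype ι]
    (x : ι → Fin n → AddCircle (1 : ℝ)) (γ : Fin n → ℤ) :
    ∑ y ∈ (differenceCount x).support, (differenceCount x y : ℂ) * ∏ j, torusExp (γ j • y j) =
      normSq (∑ p, ∏ j, torusExp (γ j • x p j)) := by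
  change (differenceCount x).sum (fun y r => (r : ℂ) * ∏ j, torusExp (γ j • y j)) = _
  rw [sum_differenceCount x _ (fun _ => by simp) (fun _ _ _ => by push_cast; ring), ← mul_conj,
    map_sum, Finset.sum_mul_sum]
  simp only [Pi.sub_apply, prod_torusExp_zsmul_sub, ofReal_one, one_mul]

section PhasePoint

variable {E : Type*} [NormedAddCommGroup E] [InnerProductSpace ℂ E]

lemma sq_mul_sum_torusExp_torusArg_sub {ι : Type*} [Fintype ι] (e : OrthonormalBasis ι ℂ E)
    {v w : E} {r : ℝ} (hv : ∀ i, ‖⟪e i, v⟫‖ = r) (hw : ∀ i, ‖⟪e i, w⟫‖ = r) :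
    (r : ℂ) ^ 2 * ∑ i, torusExp (torusArg ⟪e i, v⟫ - torusArg ⟪e i, w⟫) = ⟪w, v⟫ := by
  rw [← e.sum_inner_mul_inner, Finset.mul_sum]
  refine Finset.sum_congr rfl fun i _ => ?_
  have hv' := norm_mul_torusExp_torusArg ⟪e i, v⟫
  have hw' := congrArg conj (norm_mul_torusExp_torusArg ⟪e i, w⟫)
  rw [hv] at hv'
  rw [hw, map_mul, conj_ofReal] at hw'
  rw [torusExp_sub, ← inner_conj_symm w]
  linear_combination (r * conj (torusExp (torusArg ⟪e i, w⟫))) * hv' + ⟪e i, v⟫ * hw'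

noncomputable def torusPoint {n : ℕ} (e : OrthonormalBasis (Fin (n + 1)) ℂ E) (v : E) :
    Fin n → AddCircle (1 : ℝ) :=
  reducedPhase fun i => torusArg ⟪e i, v⟫

lemma sq_mul_norm_one_add_sum_torusExp_torusPoint_sub {n : ℕ}
    (e : OrthonormalBasis (Fin (n + 1)) ℂ E) {v w : E} {r : ℝ}
    (hv : ∀ i, ‖⟪e i, v⟫‖ = r) (hw : ∀ i, ‖⟪e i, w⟫‖ = r) :
    r ^ 2 * ‖1 + ∑ j, torusExp ((torusPoint e v - torusPoint e w) j)‖ = ‖⟪v, w⟫‖ := by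
  rw [torusPoint, torusPoint, one_add_sum_torusExp_reducedPhase_sub, norm_mul, norm_torusExp,
    one_mul, ← norm_inner_symm, ← sq_mul_sum_torusExp_torusArg_sub e hv hw, norm_mul, norm_pow,
    norm_real, Real.norm_eq_abs, sq_abs]

end PhasePoint

section MUB

variable {n : ℕ}
  (B : Fin (n + 1 + 1) → OrthonormalBasis (Fin (n + 1)) ℂ (EuclideanSpace ℂ (Fin (n + 1))))

noncomputable def mubPoint (p : Fin (n + 1) × Fin (n + 1)) : Fin n → AddCircle (1 : ℝ) :=
  torusPoint (B 0) (B p.1.succ p.2)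

variable {B}

lemma norm_one_add_sum_torusExp_mubPoint_sub (hB : ∀ j k, j ≠ k → Unbiased (B j) (B k))
    (p q : Fin (n + 1) × Fin (n + 1)) :
    ‖1 + ∑ j, torusExp ((mubPoint B p - mubPoint B q) j)‖ =
      (n + 1) * ‖⟪B p.1.succ p.2, B q.1.succ q.2⟫‖ := by
  have h := sq_mul_norm_one_add_sum_torusExp_torusPoint_sub (B 0)
    (hB 0 _ (Fin.succ_ne_zero p.1).symm · p.2) (hB 0 _ (Fin.succ_ne_zero q.1).symm · q.2)
  unfold mubPoint
  rw [← h, div_pow, one_pow, Real.sq_sqrt (by positivity)]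
  field_simp
  push_cast
  ring

lemma mubPoint_sub_mem_ORT_union_UB (hB : ∀ j k, j ≠ k → Unbiased (B j) (B k))
    {p q : Fin (n + 1) × Fin (n + 1)} (hpq : p ≠ q) :
    mubPoint B p - mubPoint B q ∈ ORT (n + 1) ∪ UB (n + 1) := by
  have h := norm_one_add_sum_torusExp_mubPoint_sub hB p q
  obtain ⟨k, a⟩ := p
  obtain ⟨l, b⟩ := q
  by_cases hkl : k = l
  · subst hkl
    have hab : a ≠ b := fun hab => hpq (by rw [hab])
    left
    rw [(B k.succ).orthonormal.2 hab, norm_zero, mul_zero, norm_eq_zero] at h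
    exact h
  · right
    rw [hB _ _ ((Fin.succ_injective _).ne hkl)] at h
    refine h.trans ?_
    push_cast
    field_simp
    rw [Real.sq_sqrt (by positivity)]

lemma mubPoint_injective (hB : ∀ j k, j ≠ k → Unbiased (B j) (B k)) (hn : 2 ≤ n + 1) :
    Function.Injective (mubPoint B) := by
  intro p q hpq
  by_contra hne
  have hmem := mubPoint_sub_mem_ORT_union_UB hB hne
  rw [hpq, sub_self] at hmem
  exact zero_notMem_ORT_union_UB hn hmem

end MUB

/-- A complete set of `d+1` mutually unbiased bases of `ℂ^d` gives rise to a
complete-pseudo-MUB-system in dimension `d`. -/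
theorem pseudo_mub_of_complete_mub (d : ℕ) (hd : 2 ≤ d)
    (B : Fin (d + 1) → OrthonormalBasis (Fin d) ℂ (EuclideanSpace ℂ (Fin d)))
    (hB : ∀ j k, j ≠ k → Unbiased (B j) (B k)) :
    ∃ f : (Fin (d - 1) → AddCircle (1 : ℝ)) →₀ ℝ,
      (∀ y, 0 ≤ f y) ∧
      (∀ y ∈ f.support, y ∈ ORT d ∪ UB d ∪ {0}) ∧
      f 0 = (d : ℝ) ^ 2 ∧
      (∑ y ∈ f.support, f y) = (d : ℝ) ^ 4 ∧
      (∀ γ : Fin (d - 1) → ℤ,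
        ((∑ y ∈ f.support, (f y : ℂ) * ∏ j, torusExp (γ j • y j)).im = 0 ∧
          0 ≤ (∑ y ∈ f.support, (f y : ℂ) * ∏ j, torusExp (γ j • y j)).re)) := by
  obtain ⟨n, rfl⟩ : ∃ n, d = n + 1 := ⟨d - 1, by omega⟩
  refine ⟨differenceCount (mubPoint B), differenceCount_nonneg _, fun y hy => ?_, ?_, ?_,
    fun γ => ?_⟩
  · obtain ⟨p, q, rfl⟩ := exists_sub_eq_of_mem_support_differenceCount _ hy
    rcases eq_or_ne p q with rfl | hpq
    · exact Or.inr (sub_self _)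
    · exact Or.inl (mubPoint_sub_mem_ORT_union_UB hB hpq)
  · rw [differenceCount_zero_of_injective _ (mubPoint_injective hB hd)]
    simp [sq]
  · rw [sum_support_differenceCount, Fintype.card_prod, Fintype.card_fin]
    push_cast
    ring
  · rw [sum_differenceCount_mul_prod_torusExp]
    exact ⟨ofReal_im _, normSq_nonneg _⟩
end
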